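/- arXiv:2411.14105 — 2 statements merged into one kernel-verified Lean document; each statement's English description precedes it below -/
import Mathlib

section
/- Let T > 0 and let α be a p.d.f. on [0,T] with quantile function α⁻¹. Then for every t in the closure (in [0,T]) of the image α⁻¹([0,1]) = { α⁻¹(s) : s ∈ [0,1] }, the right limit of the composed function t' ↦ α⁻¹(α(t')) at t equals t; that is, lim_{t' ↓ t} α⁻¹(α(t')) = t for t < T, and α⁻¹(α(T)) = T when t = T. -/
/-!
For `u ∈ [0,T]` one has `α⁻¹ (α u) ≤ u`. Conversely, a point `p = α⁻¹ s` of the image with `p < u`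
satisfies `s ≤ α u` by monotonicity, hence `p ≤ α⁻¹ (α u)`. So the image lies in the closed set
`Iic (α⁻¹ (α u)) ∪ Ici u`, and so does its closure: `t < u` forces `t ≤ α⁻¹ (α u) ≤ u`, and squeezing
gives the right limit. At `t = T` the whole image lies in the closed set `Iic (α⁻¹ 1)`.
-/

open Set Filter Topology

theorem le_of_mem_closure_of_forall_lt_imp_le {X : Type*} [TopologicalSpace X] [LinearOrder X]
    [OrderClosedTopology X] {S : Set X} {a b t : X} (h : ∀ p ∈ S, p < b → p ≤ a)
    (ht : t ∈ closure S) (htb : t < b) : t ≤ a := by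
  have hsub : closure S ⊆ Iic a ∪ Ici b :=
    closure_minimal (fun p hp => (lt_or_ge p b).imp (h p hp) id) (isClosed_Iic.union isClosed_Ici)
  exact (hsub ht).resolve_right htb.not_ge

noncomputable def quantile (T : ℝ) (α : ℝ → ℝ) (s : ℝ) : ℝ :=
  sInf {t | t ∈ Icc 0 T ∧ s ≤ α t}

namespace quantile

variable {T : ℝ} {α : ℝ → ℝ} {s s' u : ℝ}

theorem nonneg : 0 ≤ quantile T α s :=
  Real.sInf_nonneg fun _ ht => ht.1.1

theorem le_of_le_apply (hu : u ∈ Icc 0 T) (hs : s ≤ α u) : quantile T α s ≤ u :=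
  csInf_le ⟨0, fun _ ht => ht.1.1⟩ ⟨hu, hs⟩

theorem apply_le (hu : u ∈ Icc 0 T) : quantile T α (α u) ≤ u :=
  le_of_le_apply hu le_rfl

theorem mono (hT : 0 ≤ T) (hs' : s' ≤ α T) (h : s ≤ s') : quantile T α s ≤ quantile T α s' :=
  csInf_le_csInf ⟨0, fun _ ht => ht.1.1⟩ ⟨T, ⟨hT, le_rfl⟩, hs'⟩ fun _ ht => ⟨ht.1, h.trans ht.2⟩

theorem le_apply_of_lt (hα : MonotoneOn α (Icc 0 T)) (hu : u ∈ Icc 0 T) (hs : s ≤ α T)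
    (h : quantile T α s < u) : s ≤ α u := by
  have hne : {t | t ∈ Icc 0 T ∧ s ≤ α t}.Nonempty := ⟨T, ⟨hu.1.trans hu.2, le_rfl⟩, hs⟩
  obtain ⟨v, hv, hvu⟩ := exists_lt_of_csInf_lt hne h
  exact hv.2.trans (hα hv.1 hu hvu.le)

theorem le_apply_of_mem_closure (hα : MonotoneOn α (Icc 0 T)) {t : ℝ}
    (ht : t ∈ closure (quantile T α '' Iic (α T))) (hu : u ∈ Icc 0 T) (htu : t < u) :
    t ≤ quantile T α (α u) := by
  refine le_of_mem_closure_of_forall_lt_imp_le ?_ ht htu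
  rintro _ ⟨s, hs, rfl⟩ hsu
  exact mono (hu.1.trans hu.2) (hα hu ⟨hu.1.trans hu.2, le_rfl⟩ hu.2)
    (le_apply_of_lt hα hu hs hsu)

theorem closure_image_subset_Ici {A : Set ℝ} : closure (quantile T α '' A) ⊆ Ici 0 :=
  closure_minimal (image_subset_iff.2 fun _ _ => nonneg) isClosed_Ici

theorem tendsto_comp_nhdsGT (hα : MonotoneOn α (Icc 0 T)) {t : ℝ}
    (ht : t ∈ closure (quantile T α '' Iic (α T))) (htT : t < T) :
    Tendsto (fun u => quantile T α (α u)) (𝓝[>] t) (𝓝 t) := by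
  have hIoc : ∀ u ∈ Ioc t T, u ∈ Icc 0 T := fun u hu =>
    ⟨(closure_image_subset_Ici ht).trans hu.1.le, hu.2⟩
  have hev : ∀ᶠ u in 𝓝[>] t, u ∈ Ioc t T := Ioc_mem_nhdsGT htT
  refine tendsto_of_tendsto_of_tendsto_of_le_of_le' tendsto_const_nhds
    (tendsto_id.mono_left nhdsWithin_le_nhds) ?_ ?_
  · exact hev.mono fun u hu => le_apply_of_mem_closure hα ht (hIoc u hu) hu.1
  · exact hev.mono fun u hu => apply_le (hIoc u hu)

theorem apply_right_eq_of_mem_closure (hT : 0 ≤ T)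
    (hT_mem : T ∈ closure (quantile T α '' Iic (α T))) : quantile T α (α T) = T := by
  refine le_antisymm (apply_le ⟨hT, le_rfl⟩) ?_
  refine closure_minimal ?_ isClosed_Iic hT_mem
  rintro _ ⟨s, hs, rfl⟩
  exact mono hT le_rfl hs

end quantile

theorem quantile_comp_pdf_right_limit_on_closure_image_general
    (T : ℝ)
    (α : ℝ → ℝ)
    (hmono : ∀ ⦃t t' : ℝ⦄, t ∈ Icc 0 T → t' ∈ Icc 0 T → t ≤ t' → α t ≤ α t')
    (hαT : α T = 1)
    (αinv : ℝ → ℝ)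
    (hαinv : ∀ s : ℝ, αinv s = sInf {t : ℝ | t ∈ Icc 0 T ∧ s ≤ α t}) :
    ∀ t ∈ closure (αinv '' Icc (0:ℝ) 1),
      (t < T → Tendsto (fun t' => αinv (α t')) (𝓝[>] t) (𝓝 t)) ∧
      (t = T → αinv (α T) = T) := by
  obtain rfl : αinv = quantile T α := funext hαinv
  have hα : MonotoneOn α (Icc 0 T) := fun _ ht _ ht' htt' => hmono ht ht' htt'
  intro t ht
  replace ht : t ∈ closure (quantile T α '' Iic (α T)) :=
    closure_mono (image_mono fun s hs => hαT ▸ hs.2) ht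
  have ht_nonneg : 0 ≤ t := quantile.closure_image_subset_Ici ht
  refine ⟨quantile.tendsto_comp_nhdsGT hα ht, ?_⟩
  rintro rfl
  exact quantile.apply_right_eq_of_mem_closure ht_nonneg ht

/-- Let `T > 0` and let `α` be a p.d.f. on `[0,T]` with quantile
function `αinv`.  Then for every `t` in the closure (in `[0,T]`) of the image
`αinv '' [0,1]`, the right limit of `t' ↦ αinv (α t')` at `t` equals `t`:
`lim_{t' ↓ t} αinv (α t') = t` for `t < T`, and `αinv (α T) = T` when `t = T`. -/
theorem quantile_comp_pdf_right_limit_on_closure_image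
    (T : ℝ) (hT : 0 < T)
    (α : ℝ → ℝ)
    (hmono : ∀ ⦃t t' : ℝ⦄, t ∈ Icc 0 T → t' ∈ Icc 0 T → t ≤ t' → α t ≤ α t')
    (hrange : ∀ t ∈ Icc (0:ℝ) T, α t ∈ Icc (0:ℝ) 1)
    (hrc : ∀ t ∈ Ico (0:ℝ) T, Tendsto α (𝓝[>] t) (𝓝 (α t)))
    (hαT : α T = 1)
    (αinv : ℝ → ℝ)
    (hαinv : ∀ s : ℝ, αinv s = sInf {t : ℝ | t ∈ Icc 0 T ∧ s ≤ α t}) :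
    ∀ t ∈ closure (αinv '' Icc (0:ℝ) 1),
      (t < T → Tendsto (fun t' => αinv (α t')) (𝓝[>] t) (𝓝 t)) ∧
      (t = T → αinv (α T) = T) :=
  quantile_comp_pdf_right_limit_on_closure_image_general T α hmono hαT αinv hαinv
end

section
/- Let D ≥ 1, n ≥ 1, and let q_1, …, q_n ∈ Q_∞ be bounded increasing right-continuous paths [0,1) → S^D_+ with left limits, with left-continuous versions q⃗_1, …, q⃗_n. Set T = Σ_{k=1}^n tr q⃗_k(1) and assume T > 0. Then there exist a single p.d.f. α on [0,T] and functions L_1, …, L_n : [0,T] → S^D_+ such that: each L_k is increasing for the positive semidefinite order with L_k(0) = 0; q⃗_k(s) = L_k(α⁻¹(s)) for every s ∈ (0,1] and every k; Σ_{k=1}^n tr L_k(t) = t for every t ∈ [0,T]; and (Σ_{k=1}^n |L_k(t) − L_k(t')|²)^{1/2} ≤ √(nD) · |t − t'| for all t, t' ∈ [0,T]. -/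
open Set Filter Topology Matrix

/-!
Put `F s = ∑ k, tr (qv k s)` and `G s = ∑ k, tr (q k s)`. Then `F` is increasing and
left-continuous on `[0,1]` with right limits `G`, and `F 1 = T`. The p.d.f. is the generalized
inverse `α t = sup {s ∈ [0,1] | F s ≤ t}`, whose quantile function is `F` itself. When `t` falls
into a jump `[F s, G s]` of `F` (with `s = α t`), every `L k t` interpolates linearly between
`qv k s` and `q k s` with the common weight `(t - F s) / (G s - F s)`; this makes each `L k`
increasing with `∑ k, tr (L k t) = t`, and since the traces of the PSD increments of the `qv k`
add up to those of `F`, a flat piece of `F` is a flat piece of every `qv k`, which gives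
`qv k s = L k (F s)`. Finally an increment `Δ` of `L k` is PSD, so `|Δ|² ≤ (tr Δ)²`, and summing
over `k` bounds the left side of the Lipschitz estimate by `|t - t'|`.
-/

open scoped MatrixOrder ComplexOrder

namespace Matrix

section RCLike

variable {n 𝕜 : Type*} [Fintype n] [RCLike 𝕜]

theorem isClosed_setOf_posSemidef : IsClosed {A : Matrix n n 𝕜 | A.PosSemidef} := by
  simp only [posSemidef_iff_dotProduct_mulVec, ofPred_and, ofPred_forall]
  exact (isClosed_eq continuous_id.matrix_conjTranspose continuous_id).inter <|
    isClosed_iInter fun x => isClosed_le continuous_const <|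
      continuous_const.dotProduct (continuous_id.matrix_mulVec continuous_const)

instance orderClosedTopology : OrderClosedTopology (Matrix n n 𝕜) where
  isClosed_le' := isClosed_setOf_posSemidef.preimage (continuous_snd.sub continuous_fst)

theorem trace_mono {A B : Matrix n n 𝕜} (h : A ≤ B) : A.trace ≤ B.trace := by
  simpa [trace_sub] using (le_iff.mp h).trace_nonneg

end RCLike

theorem PosSemidef.apply_sq_le {n : Type*} {A : Matrix n n ℝ} (hA : A.PosSemidef) (i j : n) :
    A i j ^ 2 ≤ A i i * A j j := by
  have hdet := (hA.submatrix ![i, j]).det_nonneg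
  have hji : A j i = A i j := by simpa using hA.isHermitian.apply i j
  simp only [det_fin_two, submatrix_apply, cons_val_zero, cons_val_one, hji] at hdet
  nlinarith

theorem PosSemidef.trace_mul_transpose_le_sq_trace {n : Type*} [Fintype n] {A : Matrix n n ℝ}
    (hA : A.PosSemidef) : (A * Aᵀ).trace ≤ A.trace ^ 2 :=
  calc (A * Aᵀ).trace = ∑ i, ∑ j, A i j ^ 2 := by simp [trace, mul_apply, sq]
    _ ≤ ∑ i, ∑ j, A i i * A j j := by gcongr with i _ j _; exact hA.apply_sq_le i j
    _ = A.trace ^ 2 := by simp [trace, sq, Finset.sum_mul_sum]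

end Matrix

namespace AffineMap

theorem lineMap_mono_of_le {k E : Type*} [Ring k] [PartialOrder k] [AddCommGroup E]
    [PartialOrder E] [IsOrderedAddMonoid E] [Module k E] [SMulPosMono k E] {a b : E}
    (hab : a ≤ b) {r r' : k} (hr : r ≤ r') : lineMap a b r ≤ lineMap a b r' := by
  simp only [lineMap_apply_module']
  exact add_le_add_left (smul_le_smul_of_nonneg_right hr (sub_nonneg.2 hab)) a

theorem lineMap_div_sub {a b t : ℝ} (hat : a ≤ t) (htb : t ≤ b) :
    lineMap a b ((t - a) / (b - a)) = t := by
  rcases hat.eq_or_lt with rfl | hat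
  · simp
  rw [lineMap_apply_module', smul_eq_mul, div_mul_cancel₀ _ (by linarith)]
  ring

end AffineMap

/-- A path `q ∈ Q_∞` together with its left-continuous version `qv`; only the values of `q` on
`[0,1)` and of `qv` on `[0,1]` matter. -/
structure IsQPath {β : Type*} [Preorder β] [TopologicalSpace β] [Zero β] (q qv : ℝ → β) :
    Prop where
  monotoneOn : MonotoneOn q (Ico 0 1)
  zero_le : 0 ≤ q 0
  tendsto_nhdsGT : ∀ s ∈ Ico (0:ℝ) 1, Tendsto q (𝓝[>] s) (𝓝 (q s))
  leftLim_zero : qv 0 = 0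
  tendsto_nhdsLT : ∀ s ∈ Ioc (0:ℝ) 1, Tendsto q (𝓝[<] s) (𝓝 (qv s))

namespace IsQPath

section Preorder

variable {β : Type*} [Preorder β] [TopologicalSpace β] [OrderClosedTopology β] [Zero β]
  {q qv : ℝ → β} {u v s : ℝ}

theorem le_leftLim (h : IsQPath q qv) (hu : 0 ≤ u) (huv : u < v) (hv : v ≤ 1) :
    q u ≤ qv v := by
  refine ge_of_tendsto (h.tendsto_nhdsLT v ⟨hu.trans_lt huv, hv⟩) ?_
  filter_upwards [Ioo_mem_nhdsLT huv] with w hw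
  exact h.monotoneOn ⟨hu, huv.trans_le hv⟩ ⟨hu.trans hw.1.le, hw.2.trans_le hv⟩ hw.1.le

theorem leftLim_le (h : IsQPath q qv) (hs : 0 ≤ s) (hs1 : s < 1) : qv s ≤ q s := by
  rcases hs.eq_or_lt with rfl | hs
  · exact h.leftLim_zero ▸ h.zero_le
  refine le_of_tendsto (h.tendsto_nhdsLT s ⟨hs, hs1.le⟩) ?_
  filter_upwards [Ioo_mem_nhdsLT hs] with w hw
  exact h.monotoneOn ⟨hw.1.le, hw.2.trans hs1⟩ ⟨hs.le, hs1⟩ hw.2.le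

theorem leftLim_monotoneOn (h : IsQPath q qv) : MonotoneOn qv (Icc 0 1) := by
  rintro u ⟨hu, -⟩ v ⟨-, hv⟩ huv
  rcases huv.eq_or_lt with rfl | huv
  · exact le_rfl
  rcases hu.eq_or_lt with rfl | hu
  · exact h.leftLim_zero ▸ h.zero_le.trans (h.le_leftLim le_rfl huv hv)
  refine le_of_tendsto (h.tendsto_nhdsLT u ⟨hu, huv.le.trans hv⟩) ?_
  filter_upwards [Ioo_mem_nhdsLT hu] with w hw
  exact h.le_leftLim hw.1.le (hw.2.trans huv) hv

end Preorder

section LinearOrder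

variable {β : Type*} [LinearOrder β] [TopologicalSpace β] [OrderTopology β] [Zero β]
  {q qv : ℝ → β}

theorem tendsto_leftLim_nhdsLT (h : IsQPath q qv) :
    ∀ s ∈ Ioc (0:ℝ) 1, Tendsto qv (𝓝[<] s) (𝓝 (qv s)) := by
  intro s hs
  refine tendsto_order.2 ⟨fun b hb => ?_, fun b hb => ?_⟩
  · obtain ⟨w, hbw, hw⟩ :=
      (((h.tendsto_nhdsLT s hs).eventually (lt_mem_nhds hb)).and (Ioo_mem_nhdsLT hs.1)).exists
    filter_upwards [Ioo_mem_nhdsLT hw.2] with w' hw'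
    exact hbw.trans_le (h.le_leftLim hw.1.le hw'.1 (hw'.2.le.trans hs.2))
  · filter_upwards [Ioo_mem_nhdsLT hs.1] with w hw
    exact (h.leftLim_monotoneOn ⟨hw.1.le, hw.2.le.trans hs.2⟩ ⟨hs.1.le, hs.2⟩ hw.2.le).trans_lt hb

theorem tendsto_leftLim_nhdsGT (h : IsQPath q qv) :
    ∀ s ∈ Ico (0:ℝ) 1, Tendsto qv (𝓝[>] s) (𝓝 (q s)) := by
  intro s hs
  refine tendsto_of_tendsto_of_tendsto_of_le_of_le' tendsto_const_nhds
    (h.tendsto_nhdsGT s hs) ?_ ?_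
  · filter_upwards [Ioo_mem_nhdsGT hs.2] with w hw
    exact h.le_leftLim hs.1 hw.1 hw.2.le
  · filter_upwards [Ioo_mem_nhdsGT hs.2] with w hw
    exact h.leftLim_le (hs.1.trans hw.1.le) hw.2

end LinearOrder

end IsQPath

noncomputable def genInv (f : ℝ → ℝ) (t : ℝ) : ℝ := sSup {s | s ∈ Icc (0:ℝ) 1 ∧ f s ≤ t}

section genInv

variable {f g : ℝ → ℝ} {s t t' : ℝ}

private theorem bddAbove_sublevel : BddAbove {s | s ∈ Icc (0:ℝ) 1 ∧ f s ≤ t} :=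
  ⟨1, fun _ hs => hs.1.2⟩

private theorem nonempty_sublevel (h0 : f 0 ≤ t) : {s | s ∈ Icc (0:ℝ) 1 ∧ f s ≤ t}.Nonempty :=
  ⟨0, left_mem_Icc.2 zero_le_one, h0⟩

theorem le_genInv (hs : s ∈ Icc 0 1) (hst : f s ≤ t) : s ≤ genInv f t :=
  le_csSup bddAbove_sublevel ⟨hs, hst⟩

theorem genInv_mem_Icc (h0 : f 0 ≤ t) : genInv f t ∈ Icc 0 1 :=
  ⟨le_genInv (left_mem_Icc.2 zero_le_one) h0, csSup_le (nonempty_sublevel h0) fun _ hs => hs.1.2⟩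

theorem genInv_mono (h0 : f 0 ≤ t) (htt' : t ≤ t') : genInv f t ≤ genInv f t' :=
  csSup_le_csSup bddAbove_sublevel (nonempty_sublevel h0) fun _ hs => ⟨hs.1, hs.2.trans htt'⟩

theorem map_genInv_le (hf : MonotoneOn f (Icc 0 1))
    (hleft : ∀ s ∈ Ioc (0:ℝ) 1, Tendsto f (𝓝[<] s) (𝓝 (f s))) (h0 : f 0 ≤ t) :
    f (genInv f t) ≤ t := by
  obtain ⟨hα0, hα1⟩ := genInv_mem_Icc h0
  rcases hα0.eq_or_lt with hα | hα
  · exact hα ▸ h0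
  refine le_of_tendsto (hleft _ ⟨hα, hα1⟩) ?_
  filter_upwards [Ioo_mem_nhdsLT hα] with u hu
  obtain ⟨v, hv, huv⟩ := exists_lt_of_lt_csSup (nonempty_sublevel h0) hu.2
  exact (hf ⟨hu.1.le, hu.2.le.trans hα1⟩ hv.1 huv.le).trans hv.2

theorem le_genInv_iff (hf : MonotoneOn f (Icc 0 1))
    (hleft : ∀ s ∈ Ioc (0:ℝ) 1, Tendsto f (𝓝[<] s) (𝓝 (f s))) (hs : s ∈ Icc 0 1)
    (h0 : f 0 ≤ t) : s ≤ genInv f t ↔ f s ≤ t :=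
  ⟨fun h => (hf hs (genInv_mem_Icc h0) h).trans (map_genInv_le hf hleft h0), le_genInv hs⟩

theorem genInv_eq_one_iff (hf : MonotoneOn f (Icc 0 1))
    (hleft : ∀ s ∈ Ioc (0:ℝ) 1, Tendsto f (𝓝[<] s) (𝓝 (f s))) (h0 : f 0 ≤ t) :
    genInv f t = 1 ↔ f 1 ≤ t := by
  rw [← le_genInv_iff hf hleft (right_mem_Icc.2 zero_le_one) h0]
  exact ⟨ge_of_eq, (genInv_mem_Icc h0).2.antisymm⟩

theorem genInv_lt_one_or_map_genInv_eq (hf : MonotoneOn f (Icc 0 1))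
    (hleft : ∀ s ∈ Ioc (0:ℝ) 1, Tendsto f (𝓝[<] s) (𝓝 (f s))) (h0 : f 0 ≤ t) (h1 : t ≤ f 1) :
    genInv f t < 1 ∨ f (genInv f t) = t := by
  refine (genInv_mem_Icc h0).2.lt_or_eq.imp_right fun hα => ?_
  rw [hα]
  exact ((genInv_eq_one_iff hf hleft h0).1 hα).antisymm h1

theorem le_rightLim_genInv (hf : MonotoneOn f (Icc 0 1))
    (hleft : ∀ s ∈ Ioc (0:ℝ) 1, Tendsto f (𝓝[<] s) (𝓝 (f s)))
    (hright : ∀ s ∈ Ico (0:ℝ) 1, Tendsto f (𝓝[>] s) (𝓝 (g s)))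
    (h0 : f 0 ≤ t) (h1 : genInv f t < 1) : t ≤ g (genInv f t) := by
  have hα0 := (genInv_mem_Icc h0).1
  refine ge_of_tendsto (hright _ ⟨hα0, h1⟩) ?_
  filter_upwards [Ioo_mem_nhdsGT h1] with w hw
  by_contra! hwt
  exact hw.1.not_ge ((le_genInv_iff hf hleft ⟨hα0.trans hw.1.le, hw.2.le⟩ h0).2 hwt.le)

theorem tendsto_genInv_nhdsGT (hf : MonotoneOn f (Icc 0 1))
    (hleft : ∀ s ∈ Ioc (0:ℝ) 1, Tendsto f (𝓝[<] s) (𝓝 (f s))) (h0 : f 0 ≤ t)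
    (h1 : genInv f t < 1) : Tendsto (genInv f) (𝓝[>] t) (𝓝 (genInv f t)) := by
  refine tendsto_order.2 ⟨fun b hb => ?_, fun b hb => ?_⟩
  · filter_upwards [self_mem_nhdsWithin] with t' ht'
    exact hb.trans_le (genInv_mono h0 (le_of_lt ht'))
  obtain ⟨s, hαs, hsb⟩ := exists_between (lt_min hb h1)
  have hs : s ∈ Icc (0:ℝ) 1 :=
    ⟨(genInv_mem_Icc h0).1.trans hαs.le, hsb.le.trans (min_le_right _ _)⟩
  have hts : t < f s := not_le.1 fun h => hαs.not_ge ((le_genInv_iff hf hleft hs h0).2 h)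
  filter_upwards [Ioo_mem_nhdsGT hts] with t' ht'
  refine lt_of_lt_of_le ?_ (hsb.le.trans (min_le_left _ _))
  exact not_le.1 fun h => ht'.2.not_ge ((le_genInv_iff hf hleft hs (h0.trans ht'.1.le)).1 h)

theorem csInf_setOf_le_genInv (hf : MonotoneOn f (Icc 0 1))
    (hleft : ∀ s ∈ Ioc (0:ℝ) 1, Tendsto f (𝓝[<] s) (𝓝 (f s))) (hf0 : f 0 = 0)
    (hs : s ∈ Icc 0 1) {T : ℝ} (hsT : f s ≤ T) :
    sInf {t | t ∈ Icc 0 T ∧ s ≤ genInv f t} = f s := by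
  have hfs : 0 ≤ f s := hf0 ▸ hf (left_mem_Icc.2 zero_le_one) hs hs.1
  have hset : {t | t ∈ Icc 0 T ∧ s ≤ genInv f t} = Icc (f s) T := by
    ext t
    simp only [mem_ofPred_eq, mem_Icc]
    constructor
    · rintro ⟨⟨ht0, htT⟩, hst⟩
      exact ⟨(le_genInv_iff hf hleft hs (hf0.le.trans ht0)).1 hst, htT⟩
    · rintro ⟨hst, htT⟩
      exact ⟨⟨hfs.trans hst, htT⟩, (le_genInv_iff hf hleft hs (hf0.le.trans (hfs.trans hst))).2 hst⟩
  rw [hset, csInf_Icc hsT]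

end genInv

section JointPath

variable {ι m : Type*} [Fintype ι] [Fintype m] {q qv : ι → ℝ → Matrix m m ℝ}

def traceSum (q : ι → ℝ → Matrix m m ℝ) (s : ℝ) : ℝ := ∑ k, (q k s).trace

theorem isQPath_traceSum (h : ∀ k, IsQPath (q k) (qv k)) :
    IsQPath (traceSum q) (traceSum qv) where
  monotoneOn _ hu _ hv huv :=
    Finset.sum_le_sum fun k _ => trace_mono ((h k).monotoneOn hu hv huv)
  zero_le := Finset.sum_nonneg fun k _ => (nonneg_iff_posSemidef.1 (h k).zero_le).trace_nonneg
  tendsto_nhdsGT s hs := tendsto_finsetSum _ fun k _ =>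
    (continuous_id.matrix_trace.tendsto _).comp ((h k).tendsto_nhdsGT s hs)
  leftLim_zero := by simp [traceSum, (h _).leftLim_zero]
  tendsto_nhdsLT s hs := tendsto_finsetSum _ fun k _ =>
    (continuous_id.matrix_trace.tendsto _).comp ((h k).tendsto_nhdsLT s hs)

theorem leftLim_eq_of_traceSum_eq (h : ∀ k, IsQPath (q k) (qv k)) {u v : ℝ}
    (hu : u ∈ Icc (0:ℝ) 1) (hv : v ∈ Icc (0:ℝ) 1) (huv : u ≤ v)
    (heq : traceSum qv u = traceSum qv v) (k : ι) : qv k u = qv k v := by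
  have hle (j : ι) : (qv j v - qv j u).PosSemidef := (h j).leftLim_monotoneOn hu hv huv
  have hzero : ∑ j, (qv j v - qv j u).trace = 0 := by
    simp only [trace_sub, Finset.sum_sub_distrib]
    exact sub_eq_zero.2 heq.symm
  rw [Finset.sum_eq_zero_iff_of_nonneg fun j _ => (hle j).trace_nonneg] at hzero
  exact (sub_eq_zero.1 ((hle k).trace_eq_zero_iff.1 (hzero k (Finset.mem_univ k)))).symm

/-- If `genInv (traceSum qv) t = 1`, the denominator involves the meaningless value `q k 1`, but
for `t ≤ traceSum qv 1` the numerator is then `0`. -/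
noncomputable def jumpWeight (q qv : ι → ℝ → Matrix m m ℝ) (t : ℝ) : ℝ :=
  let s := genInv (traceSum qv) t
  (t - traceSum qv s) / (traceSum q s - traceSum qv s)

noncomputable def jointPath (q qv : ι → ℝ → Matrix m m ℝ) (k : ι) (t : ℝ) : Matrix m m ℝ :=
  AffineMap.lineMap (qv k (genInv (traceSum qv) t)) (q k (genInv (traceSum qv) t))
    (jumpWeight q qv t)

theorem jumpWeight_eq_zero {t : ℝ} (heq : traceSum qv (genInv (traceSum qv) t) = t) :
    jumpWeight q qv t = 0 := by
  simp [jumpWeight, heq]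

theorem genInv_traceSum_lt_one_or_eq (h : ∀ k, IsQPath (q k) (qv k)) {t : ℝ}
    (ht : t ∈ Icc 0 (traceSum qv 1)) :
    genInv (traceSum qv) t < 1 ∨ traceSum qv (genInv (traceSum qv) t) = t := by
  have hF := isQPath_traceSum h
  exact genInv_lt_one_or_map_genInv_eq hF.leftLim_monotoneOn hF.tendsto_leftLim_nhdsLT
    (hF.leftLim_zero.le.trans ht.1) ht.2

theorem mem_Icc_traceSum_genInv (h : ∀ k, IsQPath (q k) (qv k)) {t : ℝ} (ht : 0 ≤ t)
    (h1 : genInv (traceSum qv) t < 1) :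
    t ∈ Icc (traceSum qv (genInv (traceSum qv) t)) (traceSum q (genInv (traceSum qv) t)) := by
  have hF := isQPath_traceSum h
  have h0 : traceSum qv 0 ≤ t := hF.leftLim_zero.le.trans ht
  exact ⟨map_genInv_le hF.leftLim_monotoneOn hF.tendsto_leftLim_nhdsLT h0,
    le_rightLim_genInv hF.leftLim_monotoneOn hF.tendsto_leftLim_nhdsLT
      hF.tendsto_leftLim_nhdsGT h0 h1⟩

theorem jumpWeight_mem_Icc (h : ∀ k, IsQPath (q k) (qv k)) {t : ℝ} (ht : 0 ≤ t)
    (h1 : genInv (traceSum qv) t < 1) : jumpWeight q qv t ∈ Icc 0 1 := by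
  obtain ⟨hlo, hhi⟩ := mem_Icc_traceSum_genInv h ht h1
  exact ⟨div_nonneg (by linarith) (by linarith), div_le_one_of_le₀ (by linarith) (by linarith)⟩

theorem traceSum_jointPath (h : ∀ k, IsQPath (q k) (qv k)) {t : ℝ}
    (ht : t ∈ Icc 0 (traceSum qv 1)) : ∑ k, (jointPath q qv k t).trace = t := by
  have hlin : ∑ k, (jointPath q qv k t).trace =
      AffineMap.lineMap (traceSum qv (genInv (traceSum qv) t))
        (traceSum q (genInv (traceSum qv) t)) (jumpWeight q qv t) := by
    simp [jointPath, traceSum, AffineMap.lineMap_apply_module, trace_add, trace_smul,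
      Finset.sum_add_distrib, Finset.mul_sum]
  rw [hlin]
  rcases genInv_traceSum_lt_one_or_eq h ht with h1 | heq
  · obtain ⟨hlo, hhi⟩ := mem_Icc_traceSum_genInv h ht.1 h1
    exact AffineMap.lineMap_div_sub hlo hhi
  · rw [jumpWeight_eq_zero heq, AffineMap.lineMap_apply_zero, heq]

theorem leftLim_apply_genInv_le_jointPath (h : ∀ k, IsQPath (q k) (qv k)) {t : ℝ}
    (ht : t ∈ Icc 0 (traceSum qv 1)) (k : ι) :
    qv k (genInv (traceSum qv) t) ≤ jointPath q qv k t := by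
  rcases genInv_traceSum_lt_one_or_eq h ht with h1 | heq
  · have hle := (h k).leftLim_le
      (genInv_mem_Icc ((isQPath_traceSum h).leftLim_zero.le.trans ht.1)).1 h1
    simpa [jointPath] using AffineMap.lineMap_mono_of_le hle (jumpWeight_mem_Icc h ht.1 h1).1
  · simp [jointPath, jumpWeight_eq_zero heq]

theorem jointPath_le_apply_genInv (h : ∀ k, IsQPath (q k) (qv k)) {t : ℝ} (ht : 0 ≤ t)
    (h1 : genInv (traceSum qv) t < 1) (k : ι) :
    jointPath q qv k t ≤ q k (genInv (traceSum qv) t) := by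
  have hle := (h k).leftLim_le
    (genInv_mem_Icc ((isQPath_traceSum h).leftLim_zero.le.trans ht)).1 h1
  simpa [jointPath] using AffineMap.lineMap_mono_of_le hle (jumpWeight_mem_Icc h ht h1).2

theorem jointPath_monotoneOn (h : ∀ k, IsQPath (q k) (qv k)) (k : ι) :
    MonotoneOn (jointPath q qv k) (Icc 0 (traceSum qv 1)) := by
  intro t ht t' ht' htt'
  have hF0 := (isQPath_traceSum h).leftLim_zero
  have hα' := genInv_mem_Icc (f := traceSum qv) (hF0.le.trans ht'.1)
  rcases (genInv_mono (hF0.le.trans ht.1) htt').lt_or_eq with hlt | heq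
  · calc jointPath q qv k t ≤ q k (genInv (traceSum qv) t) :=
          jointPath_le_apply_genInv h ht.1 (hlt.trans_le hα'.2) k
      _ ≤ qv k (genInv (traceSum qv) t') :=
          (h k).le_leftLim (genInv_mem_Icc (hF0.le.trans ht.1)).1 hlt hα'.2
      _ ≤ jointPath q qv k t' := leftLim_apply_genInv_le_jointPath h ht' k
  rcases genInv_traceSum_lt_one_or_eq h ht' with h1 | hF
  · obtain ⟨hlo, hhi⟩ := mem_Icc_traceSum_genInv h ht'.1 h1
    simp only [jointPath, jumpWeight, heq]
    exact AffineMap.lineMap_mono_of_le ((h k).leftLim_le hα'.1 h1)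
      (div_le_div_of_nonneg_right (by linarith) (by linarith))
  · have hlo := map_genInv_le (isQPath_traceSum h).leftLim_monotoneOn
      (isQPath_traceSum h).tendsto_leftLim_nhdsLT (hF0.le.trans ht.1)
    rw [heq, hF] at hlo
    rw [htt'.antisymm hlo]

theorem jointPath_traceSum (h : ∀ k, IsQPath (q k) (qv k)) {s : ℝ} (hs : s ∈ Icc 0 1)
    (k : ι) : jointPath q qv k (traceSum qv s) = qv k s := by
  have hF := isQPath_traceSum h
  have h0 : traceSum qv 0 ≤ traceSum qv s :=
    hF.leftLim_monotoneOn (left_mem_Icc.2 zero_le_one) hs hs.1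
  have hsα : s ≤ genInv (traceSum qv) (traceSum qv s) := le_genInv hs le_rfl
  have hα := genInv_mem_Icc h0
  have heq : traceSum qv (genInv (traceSum qv) (traceSum qv s)) = traceSum qv s :=
    (map_genInv_le hF.leftLim_monotoneOn hF.tendsto_leftLim_nhdsLT h0).antisymm
      (hF.leftLim_monotoneOn hs hα hsα)
  rw [jointPath, jumpWeight_eq_zero heq, AffineMap.lineMap_apply_zero]
  exact (leftLim_eq_of_traceSum_eq h hs hα hsα heq.symm k).symm

theorem jointPath_zero (h : ∀ k, IsQPath (q k) (qv k)) (k : ι) : jointPath q qv k 0 = 0 := by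
  simpa [(isQPath_traceSum h).leftLim_zero, (h k).leftLim_zero] using
    jointPath_traceSum h (left_mem_Icc.2 zero_le_one) k

theorem jointPath_csInf_setOf_le_genInv (h : ∀ k, IsQPath (q k) (qv k)) {s : ℝ}
    (hs : s ∈ Icc 0 1) (k : ι) :
    jointPath q qv k (sInf {t | t ∈ Icc 0 (traceSum qv 1) ∧ s ≤ genInv (traceSum qv) t}) =
      qv k s := by
  have hF := isQPath_traceSum h
  rw [csInf_setOf_le_genInv hF.leftLim_monotoneOn hF.tendsto_leftLim_nhdsLT hF.leftLim_zero hs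
    (hF.leftLim_monotoneOn hs (right_mem_Icc.2 zero_le_one) hs.2), jointPath_traceSum h hs k]

theorem genInv_traceSum_one (h : ∀ k, IsQPath (q k) (qv k)) :
    genInv (traceSum qv) (traceSum qv 1) = 1 := by
  have hF := isQPath_traceSum h
  exact (genInv_eq_one_iff hF.leftLim_monotoneOn hF.tendsto_leftLim_nhdsLT
    (hF.leftLim_monotoneOn (left_mem_Icc.2 zero_le_one) (right_mem_Icc.2 zero_le_one)
      zero_le_one)).2 le_rfl

theorem tendsto_genInv_traceSum_nhdsGT (h : ∀ k, IsQPath (q k) (qv k)) {t : ℝ}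
    (ht : t ∈ Ico 0 (traceSum qv 1)) :
    Tendsto (genInv (traceSum qv)) (𝓝[>] t) (𝓝 (genInv (traceSum qv) t)) := by
  have hF := isQPath_traceSum h
  have h0 : traceSum qv 0 ≤ t := hF.leftLim_zero.le.trans ht.1
  refine tendsto_genInv_nhdsGT hF.leftLim_monotoneOn hF.tendsto_leftLim_nhdsLT h0 <|
    (genInv_mem_Icc h0).2.lt_of_ne fun h1 => ht.2.not_ge ?_
  exact (genInv_eq_one_iff hF.leftLim_monotoneOn hF.tendsto_leftLim_nhdsLT h0).1 h1

end JointPath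

theorem sqrt_sum_trace_mul_transpose_sub_le {ι m : Type*} [Fintype ι] [Fintype m]
    {L : ι → ℝ → Matrix m m ℝ} {S : Set ℝ} (hmono : ∀ k, MonotoneOn (L k) S)
    (htrace : ∀ t ∈ S, ∑ k, (L k t).trace = t) {t t' : ℝ} (ht : t ∈ S) (ht' : t' ∈ S) :
    √(∑ k, ((L k t - L k t') * (L k t - L k t')ᵀ).trace) ≤ |t - t'| := by
  wlog htt' : t' ≤ t generalizing t t'
  · have hsymm (k : ι) : (L k t - L k t') * (L k t - L k t')ᵀ =
        (L k t' - L k t) * (L k t' - L k t)ᵀ := by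
      rw [← neg_sub, transpose_neg, neg_mul_neg]
    simpa only [hsymm, abs_sub_comm t'] using this ht' ht (le_of_not_ge htt')
  have hΔ (k : ι) : (L k t - L k t').PosSemidef := hmono k ht' ht htt'
  rw [← Real.sqrt_sq_eq_abs]
  refine Real.sqrt_le_sqrt ?_
  calc ∑ k, ((L k t - L k t') * (L k t - L k t')ᵀ).trace
      ≤ ∑ k, (L k t - L k t').trace ^ 2 :=
        Finset.sum_le_sum fun k _ => (hΔ k).trace_mul_transpose_le_sq_trace
    _ ≤ (∑ k, (L k t - L k t').trace) ^ 2 :=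
        Finset.sum_sq_le_sq_sum_of_nonneg fun k _ => (hΔ k).trace_nonneg
    _ = (t - t') ^ 2 := by
        simp only [trace_sub, Finset.sum_sub_distrib, htrace t ht, htrace t' ht']

theorem exists_canonical_joint_decomposition_general
    (D n : ℕ) (hD : 1 ≤ D) (hn : 1 ≤ n)
    (q qv : Fin n → ℝ → Matrix (Fin D) (Fin D) ℝ)
    (hpsd : ∀ k, ∀ s ∈ Ico (0:ℝ) 1, (q k s).PosSemidef)
    (hmono : ∀ k, ∀ ⦃u v : ℝ⦄, u ∈ Ico (0:ℝ) 1 → v ∈ Ico (0:ℝ) 1 → u ≤ v →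
      (q k v - q k u).PosSemidef)
    (hq_rc : ∀ k, ∀ s ∈ Ico (0:ℝ) 1, Tendsto (q k) (𝓝[>] s) (𝓝 (q k s)))
    (hqv0 : ∀ k, qv k 0 = 0)
    (hqv : ∀ k, ∀ s ∈ Ioc (0:ℝ) 1, Tendsto (q k) (𝓝[<] s) (𝓝 (qv k s)))
    (T : ℝ) (hTdef : T = ∑ k, (qv k 1).trace) :
    ∃ (L : Fin n → ℝ → Matrix (Fin D) (Fin D) ℝ) (α : ℝ → ℝ),
      (∀ t ∈ Icc (0:ℝ) T, α t ∈ Icc (0:ℝ) 1) ∧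
      (∀ ⦃t t' : ℝ⦄, t ∈ Icc 0 T → t' ∈ Icc 0 T → t ≤ t' → α t ≤ α t') ∧
      (∀ t ∈ Ico (0:ℝ) T, Tendsto α (𝓝[>] t) (𝓝 (α t))) ∧
      α T = 1 ∧
      (∀ k, ∀ t ∈ Icc (0:ℝ) T, (L k t).PosSemidef) ∧
      (∀ k, ∀ ⦃t t' : ℝ⦄, t ∈ Icc 0 T → t' ∈ Icc 0 T → t ≤ t' →
        (L k t' - L k t).PosSemidef) ∧
      (∀ k, L k 0 = 0) ∧
      (∀ k, ∀ s ∈ Ioc (0:ℝ) 1, qv k s = L k (sInf {t : ℝ | t ∈ Icc 0 T ∧ s ≤ α t})) ∧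
      (∀ t ∈ Icc (0:ℝ) T, ∑ k, (L k t).trace = t) ∧
      (∀ t ∈ Icc (0:ℝ) T, ∀ t' ∈ Icc (0:ℝ) T,
        Real.sqrt (∑ k, ((L k t - L k t') * (L k t - L k t')ᵀ).trace)
          ≤ Real.sqrt (n * D) * |t - t'|) := by
  have h : ∀ k, IsQPath (q k) (qv k) := fun k =>
    ⟨fun _ hu _ hv huv => hmono k hu hv huv, (hpsd k 0 (left_mem_Ico.2 one_pos)).nonneg,
      hq_rc k, hqv0 k, hqv k⟩
  change T = traceSum qv 1 at hTdef
  subst hTdef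
  have hnD : (1:ℝ) ≤ √(n * D) := Real.one_le_sqrt.2 <|
    one_le_mul_of_one_le_of_one_le (by exact_mod_cast hn) (by exact_mod_cast hD)
  have hF0 := (isQPath_traceSum h).leftLim_zero
  refine ⟨jointPath q qv, genInv (traceSum qv), fun t ht => genInv_mem_Icc (hF0.le.trans ht.1),
    fun t _ ht _ htt' => genInv_mono (hF0.le.trans ht.1) htt',
    fun t ht => tendsto_genInv_traceSum_nhdsGT h ht, genInv_traceSum_one h,
    fun k t ht => ?_, fun k _ _ ht ht' htt' => jointPath_monotoneOn h k ht ht' htt',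
    jointPath_zero h,
    fun k s hs => (jointPath_csInf_setOf_le_genInv h (Ioc_subset_Icc_self hs) k).symm,
    fun t ht => traceSum_jointPath h ht, fun t ht t' ht' => ?_⟩
  · have hmono0 := jointPath_monotoneOn h k (left_mem_Icc.2 (ht.1.trans ht.2)) ht ht.1
    rw [jointPath_zero h] at hmono0
    exact hmono0.posSemidef
  · exact (sqrt_sum_trace_mul_transpose_sub_le (jointPath_monotoneOn h)
      (fun t ht => traceSum_jointPath h ht) ht ht').trans (le_mul_of_one_le_left (abs_nonneg _) hnD)

/-- Let `D ≥ 1`, `n ≥ 1`, and let `q 1, …, q n ∈ Q_∞` be bounded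
increasing right-continuous paths `[0,1) → S^D_+` with left limits, with
left-continuous versions `qv k`.  Set `T = Σ_k tr (qv k 1) > 0`.  Then there exist
a single p.d.f. `α` on `[0,T]` and paths `L k : [0,T] → S^D_+` such that: each
`L k` is increasing for the PSD order with `L k 0 = 0`; `qv k s = L k (α⁻¹ s)` for
every `s ∈ (0,1]` and every `k`; `Σ_k tr (L k t) = t` for every `t ∈ [0,T]`; and
`(Σ_k |L k t − L k t'|²)^(1/2) ≤ √(n D) · |t − t'|` for all `t, t' ∈ [0,T]`. -/
theorem exists_canonical_joint_decomposition
    (D n : ℕ) (hD : 1 ≤ D) (hn : 1 ≤ n)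
    (q qv : Fin n → ℝ → Matrix (Fin D) (Fin D) ℝ)
    (hpsd : ∀ k, ∀ s ∈ Ico (0:ℝ) 1, (q k s).PosSemidef)
    (hmono : ∀ k, ∀ ⦃u v : ℝ⦄, u ∈ Ico (0:ℝ) 1 → v ∈ Ico (0:ℝ) 1 → u ≤ v →
      (q k v - q k u).PosSemidef)
    (hq_rc : ∀ k, ∀ s ∈ Ico (0:ℝ) 1, Tendsto (q k) (𝓝[>] s) (𝓝 (q k s)))
    (hbdd : ∃ C : ℝ, ∀ k, ∀ s ∈ Ico (0:ℝ) 1,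
      Real.sqrt ((q k s * (q k s)ᵀ).trace) ≤ C)
    (hqv0 : ∀ k, qv k 0 = 0)
    (hqv : ∀ k, ∀ s ∈ Ioc (0:ℝ) 1, Tendsto (q k) (𝓝[<] s) (𝓝 (qv k s)))
    (T : ℝ) (hTdef : T = ∑ k, (qv k 1).trace) (hT : 0 < T) :
    ∃ (L : Fin n → ℝ → Matrix (Fin D) (Fin D) ℝ) (α : ℝ → ℝ),
      (∀ t ∈ Icc (0:ℝ) T, α t ∈ Icc (0:ℝ) 1) ∧
      (∀ ⦃t t' : ℝ⦄, t ∈ Icc 0 T → t' ∈ Icc 0 T → t ≤ t' → α t ≤ α t') ∧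
      (∀ t ∈ Ico (0:ℝ) T, Tendsto α (𝓝[>] t) (𝓝 (α t))) ∧
      α T = 1 ∧
      (∀ k, ∀ t ∈ Icc (0:ℝ) T, (L k t).PosSemidef) ∧
      (∀ k, ∀ ⦃t t' : ℝ⦄, t ∈ Icc 0 T → t' ∈ Icc 0 T → t ≤ t' →
        (L k t' - L k t).PosSemidef) ∧
      (∀ k, L k 0 = 0) ∧
      (∀ k, ∀ s ∈ Ioc (0:ℝ) 1, qv k s = L k (sInf {t : ℝ | t ∈ Icc 0 T ∧ s ≤ α t})) ∧
      (∀ t ∈ Icc (0:ℝ) T, ∑ k, (L k t).trace = t) ∧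
      (∀ t ∈ Icc (0:ℝ) T, ∀ t' ∈ Icc (0:ℝ) T,
        Real.sqrt (∑ k, ((L k t - L k t') * (L k t - L k t')ᵀ).trace)
          ≤ Real.sqrt (n * D) * |t - t'|) :=
  exists_canonical_joint_decomposition_general D n hD hn q qv hpsd hmono hq_rc hqv0 hqv T hTdef
end
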